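/- arXiv:1810.07993 — 4 statements merged into one kernel-verified Lean document; each statement's English description precedes it below -/
import Mathlib

section
/- Let T > 0, let A ∈ C¹([0,T]) with A(t) > 0 for all t ∈ [0,T], and suppose there is a constant B such that (d/dt)A(t) ≤ B·A(t)·ln(2 + A(t)) for all t ∈ [0,T]. Then A(t) ≤ (2 + A(0))^{e^{Bt}} for all t ∈ [0,T]. -/
open MeasureTheory Real Filter
open scoped ENNReal NNReal

noncomputable section

/-- Points of `d`-dimensional space (and of the torus `𝕋^d`, realized as
period-1 periodic functions on `ℝ^d`). -/
abbrev Vec (d : ℕ) := Fin d → ℝ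

/-- The fundamental domain `[0,1]^d` of the torus `𝕋^d`. -/
def unitCube (d : ℕ) : Set (Vec d) := Set.Icc 0 1

/-- A function on `ℝ^d` represents a function on the torus `𝕋^d` iff it has period `1`
in each coordinate direction. -/
def IsPeriodic {d : ℕ} (f : Vec d → ℝ) : Prop :=
  ∀ (x : Vec d) (j : Fin d), f (x + Pi.single j 1) = f x

def IsPeriodicVec {d : ℕ} (u : Vec d → Fin d → ℝ) : Prop :=
  ∀ i, IsPeriodic fun x => u x i

/-- The partial derivative `∂_j f`. -/
def pd {d : ℕ} (j : Fin d) (f : Vec d → ℝ) : Vec d → ℝ :=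
  fun x => fderiv ℝ f x (Pi.single j 1)

/-- The directional derivative `∂f/∂n = Σ_j n^j ∂_j f` along a constant vector `n`. -/
def dirDeriv {d : ℕ} (n : Vec d) (f : Vec d → ℝ) : Vec d → ℝ :=
  fun x => ∑ j, n j * pd j f x

/-- The Laplacian `Δ f = Σ_j ∂_j² f`. -/
def lap {d : ℕ} (f : Vec d → ℝ) : Vec d → ℝ :=
  fun x => ∑ j, pd j (pd j f) x

/-- The momentum `m = (1 - Δ) u` of a velocity field `u`. -/
def mom {d : ℕ} (u : Vec d → Fin d → ℝ) : Vec d → Fin d → ℝ :=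
  fun x i => u x i - lap (fun y => u y i) x

/-- The Euler–Poincaré equations
`∂_t m^i + Σ_j u^j ∂_j m^i + Σ_j m^j ∂_i u^j + m^i Σ_j ∂_j u^j = 0`, `m = (1-Δ)u`,
hold (pointwise, classically) at time `t`. -/
def EPEq {d : ℕ} (u : ℝ → Vec d → Fin d → ℝ) (t : ℝ) : Prop :=
  ∀ (x : Vec d) (i : Fin d),
    deriv (fun s => mom (u s) x i) t
      + (∑ j, u t x j * pd j (fun y => mom (u t) y i) x)
      + (∑ j, mom (u t) x j * pd i (fun y => u t y j) x)
      + mom (u t) x i * (∑ j, pd j (fun y => u t y j) x) = 0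

/-- Fourier coefficient on the torus: `f̂(ξ) = ∫_{[0,1]^d} f(x) e^{-2πi ξ·x} dx`, `ξ ∈ ℤ^d`. -/
def fourierCoeffT {d : ℕ} (f : Vec d → ℝ) (ξ : Fin d → ℤ) : ℂ :=
  ∫ x in unitCube d,
    (f x : ℂ) * Complex.exp (-(2 * (π : ℂ) * Complex.I) * ∑ j, (ξ j : ℂ) * (x j : ℂ))

/-- The Sobolev weight `(1 + |ξ|²)^s`. -/
def hsWeight (d : ℕ) (s : ℝ) (ξ : Fin d → ℤ) : ℝ :=
  (1 + ∑ j, ((ξ j : ℝ)) ^ 2) ^ s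

/-- Membership in the Sobolev space `H^s(𝕋^d)` (for a scalar function). -/
def MemHs {d : ℕ} (s : ℝ) (f : Vec d → ℝ) : Prop :=
  Summable fun ξ : Fin d → ℤ => hsWeight d s ξ * ‖fourierCoeffT f ξ‖ ^ 2

/-- The square of the `H^s(𝕋^d)` norm of a scalar function. -/
def hsNormSq {d : ℕ} (s : ℝ) (f : Vec d → ℝ) : ℝ :=
  ∑' ξ : Fin d → ℤ, hsWeight d s ξ * ‖fourierCoeffT f ξ‖ ^ 2

/-- Membership in `H^s(𝕋^d)` for a vector field. -/
def MemHsVec {d : ℕ} (s : ℝ) (u : Vec d → Fin d → ℝ) : Prop :=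
  ∀ i, MemHs s fun x => u x i

/-- The `H^s(𝕋^d)` norm of a vector field. -/
def hsNormVec {d : ℕ} (s : ℝ) (u : Vec d → Fin d → ℝ) : ℝ :=
  Real.sqrt (∑ i, hsNormSq s fun x => u x i)

/-- The squared `H¹` (energy) norm `∫_{𝕋^d} |u|² + |∇u|² dx` of a vector field. -/
def h1NormSq {d : ℕ} (u : Vec d → Fin d → ℝ) : ℝ :=
  ∫ x in unitCube d,
    ((∑ i, (u x i) ^ 2) + ∑ i, ∑ j, (pd j (fun y => u y i) x) ^ 2)

/-- The `H¹` (energy) norm `(∫_{𝕋^d} |u|² + |∇u|² dx)^{1/2}` of a vector field. -/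
def h1Norm {d : ℕ} (u : Vec d → Fin d → ℝ) : ℝ := Real.sqrt (h1NormSq u)

/-- `‖∇u‖_{L^∞(𝕋^d)}`: the sup over the torus of the Euclidean norm of `∇u`. -/
def gradSup {d : ℕ} (u : Vec d → Fin d → ℝ) : ℝ :=
  ⨆ x : unitCube d, Real.sqrt (∑ i, ∑ j, (pd j (fun y => u y i) (x : Vec d)) ^ 2)

/-- `u ∈ C(I; H^s(𝕋^d))`: each time slice belongs to `H^s` and `t ↦ u(t)` is continuous
into `H^s`. -/
def ContHs {d : ℕ} (s : ℝ) (I : Set ℝ) (u : ℝ → Vec d → Fin d → ℝ) : Prop :=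
  (∀ t ∈ I, MemHsVec s (u t)) ∧
    ∀ t₀ ∈ I,
      Filter.Tendsto (fun t => hsNormVec s fun x i => u t x i - u t₀ x i)
        (nhdsWithin t₀ I) (nhds 0)

/-- `u` is a solution of the periodic Euler–Poincaré equations with data `u₀`:
the equation holds (classically) on `Ieq`, and on `Icont` the solution is periodic
and belongs continuously to `H^k`. -/
def IsEPSol {d : ℕ} (k : ℝ) (Ieq Icont : Set ℝ) (u₀ : Vec d → Fin d → ℝ)
    (u : ℝ → Vec d → Fin d → ℝ) : Prop :=
  u 0 = u₀ ∧ (∀ t ∈ Ieq, EPEq u t) ∧ (∀ t ∈ Icont, IsPeriodicVec (u t)) ∧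
    ContHs k Icont u

/-- The real interval `[0, T)` for `T ∈ [0,∞]`. -/
def ivl (T : ℝ≥0∞) : Set ℝ := {t : ℝ | 0 ≤ t ∧ ENNReal.ofReal t < T}

/-- The real interval `(0, T)` for `T ∈ [0,∞]`. -/
def ivlEq (T : ℝ≥0∞) : Set ℝ := {t : ℝ | 0 < t ∧ ENNReal.ofReal t < T}

/-- `u` is the solution of the periodic Euler–Poincaré equations with data `u₀` on the
maximal existence interval `[0, T)`: it is a solution there, and there is no solution on
any strictly larger interval. -/
def MaximalEPSol {d : ℕ} (k : ℝ) (u₀ : Vec d → Fin d → ℝ)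
    (u : ℝ → Vec d → Fin d → ℝ) (T : ℝ≥0∞) : Prop :=
  IsEPSol k (ivlEq T) (ivl T) u₀ u ∧
    ∀ T' : ℝ≥0∞, T < T' →
      ¬∃ v : ℝ → Vec d → Fin d → ℝ, IsEPSol k (ivlEq T') (ivl T') u₀ v

/-- An admissible cutoff generating a Littlewood–Paley decomposition: `η` is smooth, even,
`[0,1]`-valued, supported in `{|ξ| ≤ 8/5}` and `≡ 1` on `{|ξ| ≤ 5/4}`. -/
structure LPCutoff where
  η : ℝ → ℝ
  smooth : ∀ n : ℕ, ContDiff ℝ n η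
  even : ∀ x, η (-x) = η x
  mem01 : ∀ x, η x ∈ Set.Icc (0 : ℝ) 1
  suppC : ∀ x : ℝ, 8 / 5 ≤ |x| → η x = 0
  one : ∀ x : ℝ, |x| ≤ 5 / 4 → η x = 1

/-- The symbol of the `n`-th Littlewood–Paley block; index `0` plays the role of `Δ_{-1}`
and index `n+1` the role of `Δ_n`, with symbol `φ(2^{-n}ξ)`, `φ(ξ) = η(ξ) - η(ξ/2)`. -/
def lpSymb (c : LPCutoff) : ℕ → ℝ → ℝ
  | 0 => c.η
  | n + 1 => fun ξ => c.η (ξ / 2 ^ n) - c.η (ξ / 2 ^ (n + 1))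

/-- The `n`-th Littlewood–Paley block `Δ_{n-1} f` of a function on the torus. -/
def lpBlock {d : ℕ} (c : LPCutoff) (n : ℕ) (f : Vec d → ℝ) : Vec d → ℂ :=
  fun x => ∑' ξ : Fin d → ℤ,
    (lpSymb c n (Real.sqrt (∑ j, ((ξ j : ℝ)) ^ 2)) : ℂ) * fourierCoeffT f ξ *
      Complex.exp ((2 * (π : ℂ) * Complex.I) * ∑ j, (ξ j : ℂ) * (x j : ℂ))

/-- The `ℓ^r` norm (`r ∈ (0,∞]`) of a sequence of extended nonnegative reals. -/
def ellNorm (r : ℝ≥0∞) (a : ℕ → ℝ≥0∞) : ℝ≥0∞ :=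
  if r = ⊤ then ⨆ n, a n else (∑' n, a n ^ r.toReal) ^ (1 / r.toReal)

/-- The Besov norm `‖f‖_{B^s_{p,r}(𝕋^d)} = ‖(2^{js} ‖Δ_j f‖_{L^p})_j‖_{ℓ^r}`. -/
def besovNorm {d : ℕ} (c : LPCutoff) (s : ℝ) (p r : ℝ≥0∞) (f : Vec d → ℝ) : ℝ≥0∞ :=
  ellNorm r fun n =>
    ENNReal.ofReal ((2 : ℝ) ^ (((n : ℝ) - 1) * s)) *
      eLpNorm (lpBlock c n f) p (volume.restrict (unitCube d))

/-- The Besov norm of a vector field. -/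
def besovNormVec {d : ℕ} (c : LPCutoff) (s : ℝ) (p r : ℝ≥0∞)
    (u : Vec d → Fin d → ℝ) : ℝ≥0∞ :=
  ∑ i, besovNorm c s p r fun x => u x i

/-- `u` is a solution of the periodic Euler–Poincaré equations with data `u₀`,
belonging continuously to `H^∞ = ∩_s H^s`. -/
def IsEPSolInf {d : ℕ} (Ieq Icont : Set ℝ) (u₀ : Vec d → Fin d → ℝ)
    (u : ℝ → Vec d → Fin d → ℝ) : Prop :=
  u 0 = u₀ ∧ (∀ t ∈ Ieq, EPEq u t) ∧ (∀ t ∈ Icont, IsPeriodicVec (u t)) ∧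
    ∀ s : ℝ, ContHs s Icont u

/-- The periodic peakon profile: the `1`-periodic function equal to
`cosh(1/2 - z)/sinh(1/2)` on `[0,1]`. -/
def Phi (z : ℝ) : ℝ := Real.cosh (1 / 2 - Int.fract z) / Real.sinh (1 / 2)

end

/-!
If `B ≥ 0`, the function `log (2 + A)` satisfies the linear differential inequality
`(log (2 + A))' ≤ B log (2 + A)`, because `A / (2 + A) ≤ 1`; if `B ≤ 0`, the function `log A`
satisfies `(log A)' ≤ B log A`, because `log A ≤ log (2 + A)`. In either case the linear Grönwall
inequality bounds the logarithm by `e^{Bt}` times its initial value, and exponentiating gives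
the claim.
-/

theorem le_mul_exp_of_deriv_right_le_mul {f f' : ℝ → ℝ} {K a b : ℝ}
    (hf : ContinuousOn f (Set.Icc a b))
    (hf' : ∀ x ∈ Set.Ico a b, HasDerivWithinAt f (f' x) (Set.Ici x) x)
    (bound : ∀ x ∈ Set.Ico a b, f' x ≤ K * f x) :
    ∀ x ∈ Set.Icc a b, f x ≤ f a * exp (K * (x - a)) := by
  intro x hx
  simpa only [gronwallBound_ε0] using
    le_gronwallBound_of_liminf_deriv_right_le hf
      (fun x hx _ hr => (hf' x hx).liminf_right_slope_le hr) le_rfl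
      (ε := 0) (by simpa only [add_zero] using bound) x hx

section LogGronwall

variable {A A' : ℝ → ℝ} {a b B : ℝ}
  (hA : ContinuousOn A (Set.Icc a b))
  (hA' : ∀ x ∈ Set.Ico a b, HasDerivWithinAt A (A' x) (Set.Ici x) x)
  (hpos : ∀ x ∈ Set.Icc a b, 0 < A x)
  (hineq : ∀ x ∈ Set.Ico a b, A' x ≤ B * A x * log (2 + A x))
include hA hA' hpos hineq

theorem log_two_add_le_of_deriv_le_mul_log_two_add (hB : 0 ≤ B) :
    ∀ t ∈ Set.Icc a b, log (2 + A t) ≤ log (2 + A a) * exp (B * (t - a)) := by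
  have h2A : ∀ x ∈ Set.Icc a b, 0 < 2 + A x := fun x hx => by linarith [hpos x hx]
  refine le_mul_exp_of_deriv_right_le_mul
    (hA.const_add 2 |>.log fun x hx => (h2A x hx).ne')
    (fun x hx => ((hA' x hx).const_add 2).log (h2A x (Set.Ico_subset_Icc_self hx)).ne') ?_
  intro x hx
  have hx' := Set.Ico_subset_Icc_self hx
  have hlog : 0 ≤ B * log (2 + A x) :=
    mul_nonneg hB (log_nonneg (by linarith [hpos x hx']))
  rw [div_le_iff₀ (h2A x hx')]
  calc A' x ≤ B * log (2 + A x) * A x := by linarith [hineq x hx]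
    _ ≤ B * log (2 + A x) * (2 + A x) := by gcongr; linarith

theorem log_le_of_deriv_le_mul_log_two_add (hB : B ≤ 0) :
    ∀ t ∈ Set.Icc a b, log (A t) ≤ log (A a) * exp (B * (t - a)) := by
  refine le_mul_exp_of_deriv_right_le_mul (hA.log fun x hx => (hpos x hx).ne')
    (fun x hx => (hA' x hx).log (hpos x (Set.Ico_subset_Icc_self hx)).ne') ?_
  intro x hx
  have hAx := hpos x (Set.Ico_subset_Icc_self hx)
  have hBA : B * A x ≤ 0 := mul_nonpos_of_nonpos_of_nonneg hB hAx.le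
  rw [div_le_iff₀ hAx]
  calc A' x ≤ B * A x * log (2 + A x) := hineq x hx
    _ ≤ B * A x * log (A x) :=
        mul_le_mul_of_nonpos_left (log_le_log hAx (by linarith)) hBA
    _ = B * log (A x) * A x := by ring

theorem le_rpow_exp_of_deriv_le_mul_log_two_add :
    ∀ t ∈ Set.Icc a b, A t ≤ (2 + A a) ^ exp (B * (t - a)) := by
  intro t ht
  have hAa := hpos a ⟨le_rfl, ht.1.trans ht.2⟩
  have hAt := hpos t ht
  rw [rpow_def_of_pos (by linarith)]
  rcases le_total 0 B with hB | hB
  · calc A t ≤ exp (log (2 + A t)) := by rw [exp_log (by linarith)]; linarith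
      _ ≤ _ := exp_le_exp.2 (log_two_add_le_of_deriv_le_mul_log_two_add hA hA' hpos hineq hB t ht)
  · calc A t = exp (log (A t)) := (exp_log hAt).symm
      _ ≤ exp (log (A a) * exp (B * (t - a))) :=
          exp_le_exp.2 (log_le_of_deriv_le_mul_log_two_add hA hA' hpos hineq hB t ht)
      _ ≤ exp (log (2 + A a) * exp (B * (t - a))) := by
          gcongr; linarith

end LogGronwall

theorem statement9_general (T : ℝ) (A : ℝ → ℝ) (B : ℝ)
    (hA : ContDiffOn ℝ 1 A (Set.Icc 0 T))
    (hpos : ∀ t ∈ Set.Icc (0 : ℝ) T, 0 < A t)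
    (hineq : ∀ t ∈ Set.Icc (0 : ℝ) T,
      derivWithin A (Set.Icc 0 T) t ≤ B * A t * Real.log (2 + A t)) :
    ∀ t ∈ Set.Icc (0 : ℝ) T, A t ≤ (2 + A 0) ^ Real.exp (B * t) := by
  have hA' : ∀ x ∈ Set.Ico (0 : ℝ) T,
      HasDerivWithinAt A (derivWithin A (Set.Icc 0 T) x) (Set.Ici x) x := fun x hx =>
    (hA.differentiableOn one_ne_zero x (Set.Ico_subset_Icc_self hx)).hasDerivWithinAt
      |>.mono_of_mem_nhdsWithin (Icc_mem_nhdsGE_of_mem hx)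
  intro t ht
  simpa only [sub_zero] using le_rpow_exp_of_deriv_le_mul_log_two_add hA.continuousOn hA' hpos
    (fun x hx => hineq x (Set.Ico_subset_Icc_self hx)) t ht

/-- Lemma 5.3, logarithmic Gronwall inequality. If `A ∈ C¹([0,T])`
is positive and `A'(t) ≤ B A(t) ln(2 + A(t))` on `[0,T]`, then
`A(t) ≤ (2 + A(0))^{e^{Bt}}` on `[0,T]`. -/
theorem statement9 (T : ℝ) (hT : 0 < T) (A : ℝ → ℝ) (B : ℝ)
    (hA : ContDiffOn ℝ 1 A (Set.Icc 0 T))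
    (hpos : ∀ t ∈ Set.Icc (0 : ℝ) T, 0 < A t)
    (hineq : ∀ t ∈ Set.Icc (0 : ℝ) T,
      derivWithin A (Set.Icc 0 T) t ≤ B * A t * Real.log (2 + A t)) :
    ∀ t ∈ Set.Icc (0 : ℝ) T, A t ≤ (2 + A 0) ^ Real.exp (B * t) :=
  statement9_general T A B hA hpos hineq
end

section
/- Let a > 0, let T* ∈ (0, ∞], and let g : [0, T*) → ℝ be differentiable with g'(t) ≤ −(1/2)(g(t) + a)(g(t) − a) for all t ∈ [0, T*) and g(0) < −a. Then g(t) < −a for all t ∈ [0, T*), the inequality ((g(0)+a)/(g(0)−a))·e^{a t} − 1 ≤ 2a/(g(t) − a) ≤ 0 holds for all t ∈ [0, T*), and consequently T* ≤ (1/a)·ln((g(0) − a)/(g(0) + a)); if T* equals this bound then g(t) → −∞ as t → T*. -/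
open MeasureTheory Real Filter
open scoped ENNReal NNReal

/-!
The Riccati comparison runs through the ratio `q = (g + a)/(g - a) = 1 + 2a/(g - a)`: as long as
`g < a`, the differential inequality for `g` becomes `q' ≥ a q`, so `e^{-at} q(t)` is
nondecreasing and `q(t) ≥ q(0) e^{at}`. Since `q(0) > 0`, `q` cannot vanish, so `g` never reaches
`-a`; and since `g < -a` forces `q < 1`, `q(0) e^{at} < 1` bounds the lifespan. Solving
`q(0) e^{at} - 1 ≤ 2a/(g - a)` for `g` bounds `g` by the exact solution with the same initial
value, which tends to `-∞` at that bound.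
-/

open Set Topology

theorem monotoneOn_exp_neg_mul_mul_of_mul_le_deriv {a : ℝ} {q : ℝ → ℝ} {s : Set ℝ}
    (hs : Convex ℝ s) (hq : ContinuousOn q s)
    (hq' : ∀ x ∈ interior s, ∃ q', HasDerivAt q q' x ∧ a * q x ≤ q') :
    MonotoneOn (fun t => exp (-(a * t)) * q t) s := by
  have hexp (x : ℝ) : HasDerivAt (fun t => exp (-(a * t))) (exp (-(a * x)) * -a) x := by
    simpa using ((hasDerivAt_id x).const_mul a).neg.exp
  refine monotoneOn_of_deriv_nonneg hs ((continuous_exp.comp_continuousOn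
    (continuousOn_const.mul continuousOn_id).neg).mul hq) (fun x hx => ?_) (fun x hx => ?_)
  · obtain ⟨q', hq'x, -⟩ := hq' x hx
    exact ((hexp x).mul hq'x).differentiableAt.differentiableWithinAt
  · obtain ⟨q', hq'x, hle⟩ := hq' x hx
    have hd : HasDerivAt (fun t => exp (-(a * t)) * q t) _ x := (hexp x).mul hq'x
    rw [hd.deriv,
      show exp (-(a * x)) * -a * q x + exp (-(a * x)) * q' = exp (-(a * x)) * (q' - a * q x) by
        ring]
    exact mul_nonneg (exp_pos _).le (sub_nonneg.mpr hle)

theorem ContinuousOn.forall_lt_of_ne_at_first_hit {f : ℝ → ℝ} {b t c : ℝ}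
    (hf : ContinuousOn f (Icc b t)) (hb : f b < c)
    (hne : ∀ s ∈ Icc b t, (∀ r ∈ Ico b s, f r < c) → f s ≠ c) :
    ∀ s ∈ Icc b t, f s < c := by
  by_contra! ⟨s, hs, hcs⟩
  have hbdd : BddBelow (Icc b t ∩ f ⁻¹' Ici c) := ⟨b, fun r hr => hr.1.1⟩
  have ht₀ : sInf (Icc b t ∩ f ⁻¹' Ici c) ∈ Icc b t ∩ f ⁻¹' Ici c :=
    (hf.preimage_isClosed_of_isClosed isClosed_Icc isClosed_Ici).csInf_mem ⟨s, hs, hcs⟩ hbdd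
  set t₀ := sInf (Icc b t ∩ f ⁻¹' Ici c)
  have hbelow : ∀ r ∈ Ico b t₀, f r < c := fun r hr => not_le.mp fun hcr =>
    hr.2.not_ge (csInf_le hbdd ⟨⟨hr.1, hr.2.le.trans ht₀.1.2⟩, hcr⟩)
  have hgt : c < f t₀ := lt_of_le_of_ne ht₀.2 (hne t₀ ht₀.1 hbelow).symm
  obtain ⟨r, hr, hfr⟩ := intermediate_value_Icc ht₀.1.1
    (hf.mono (Icc_subset_Icc_right ht₀.1.2)) ⟨hb.le, hgt.le⟩
  rcases hr.2.lt_or_eq with hlt | rfl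
  · exact (hbelow r ⟨hr.1, hlt⟩).ne hfr
  · exact hgt.ne' hfr

-- The solution of `g' = -(g + a)(g - a)/2`, `g(0) = c`: along it `(g + a)/(g - a)` is
-- exactly `((c + a)/(c - a)) e^{at}`.
noncomputable def riccatiSolution (a c t : ℝ) : ℝ :=
  a + 2 * a / ((c + a) / (c - a) * exp (a * t) - 1)

theorem tendsto_riccatiSolution_atBot {a c : ℝ} (ha : 0 < a) (hc : c < -a) :
    Tendsto (riccatiSolution a c) (𝓝[<] (1 / a * log ((c - a) / (c + a)))) atBot := by
  set B := 1 / a * log ((c - a) / (c + a))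
  have hca : c + a < 0 := by linarith
  have hca' : c - a < 0 := by linarith
  have hD : StrictMono fun t => (c + a) / (c - a) * exp (a * t) - 1 := fun s t hst => by
    have : 0 < (c + a) / (c - a) := div_pos_of_neg_of_neg hca hca'
    dsimp only
    gcongr
  have hDB : (c + a) / (c - a) * exp (a * B) - 1 = 0 := by
    rw [← mul_assoc, mul_one_div_cancel ha.ne', one_mul, exp_log (div_pos_of_neg_of_neg hca' hca)]
    field_simp [hca.ne, hca'.ne]
    ring
  have hD0 : Tendsto (fun t => (c + a) / (c - a) * exp (a * t) - 1) (𝓝[<] B) (𝓝[<] 0) :=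
    hDB ▸ (Continuous.continuousWithinAt (by fun_prop)).tendsto_nhdsWithin fun t ht => hD ht
  have := (tendsto_inv_nhdsLT_zero.comp hD0).const_mul_atBot (by linarith : 0 < 2 * a)
  unfold riccatiSolution
  simpa only [div_eq_mul_inv, Function.comp_def] using tendsto_atBot_add_const_left _ a this

def IsRiccatiSubsolutionOn (a : ℝ) (g : ℝ → ℝ) (s : Set ℝ) : Prop :=
  ContinuousOn g s ∧
    ∀ x ∈ interior s, ∃ g', HasDerivAt g g' x ∧ g' ≤ -(1 / 2) * (g x + a) * (g x - a)

theorem isRiccatiSubsolutionOn_of_derivWithin {a : ℝ} {g : ℝ → ℝ} {s : Set ℝ}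
    (hdiff : ∀ t ∈ s, DifferentiableWithinAt ℝ g s t)
    (hineq : ∀ t ∈ s, derivWithin g s t ≤ -(1 / 2) * (g t + a) * (g t - a)) :
    IsRiccatiSubsolutionOn a g s :=
  ⟨fun t ht => (hdiff t ht).continuousWithinAt, fun x hx =>
    ⟨derivWithin g s x,
      (hdiff x (interior_subset hx)).hasDerivWithinAt.hasDerivAt (mem_interior_iff_mem_nhds.mp hx),
      hineq x (interior_subset hx)⟩⟩

namespace IsRiccatiSubsolutionOn

variable {a : ℝ} {g : ℝ → ℝ}

theorem mono {s t : Set ℝ} (hg : IsRiccatiSubsolutionOn a g s) (hts : t ⊆ s) :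
    IsRiccatiSubsolutionOn a g t :=
  ⟨hg.1.mono hts, fun x hx => hg.2 x (interior_mono hts hx)⟩

theorem monotoneOn_exp_neg_mul_ratio {s : Set ℝ} (ha : 0 ≤ a)
    (hg : IsRiccatiSubsolutionOn a g s) (hs : Convex ℝ s) (hne : ∀ x ∈ s, g x ≠ a) :
    MonotoneOn (fun t => exp (-(a * t)) * ((g t + a) / (g t - a))) s := by
  have hsub : ∀ x ∈ s, g x - a ≠ 0 := fun x hx => sub_ne_zero.mpr (hne x hx)
  refine monotoneOn_exp_neg_mul_mul_of_mul_le_deriv hs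
    ((hg.1.add continuousOn_const).div (hg.1.sub continuousOn_const) hsub) fun x hx => ?_
  obtain ⟨g', hg'x, hle⟩ := hg.2 x hx
  have hx0 := hsub x (interior_subset hx)
  refine ⟨_, (hg'x.add_const a).div (hg'x.sub_const a) hx0, ?_⟩
  have key : (g' * (g x - a) - (g x + a) * g') / (g x - a) ^ 2 - a * ((g x + a) / (g x - a))
      = a * (-2 * g' - (g x + a) * (g x - a)) / (g x - a) ^ 2 := by
    field_simp
    ring
  have : 0 ≤ a * (-2 * g' - (g x + a) * (g x - a)) / (g x - a) ^ 2 :=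
    div_nonneg (mul_nonneg ha (by linarith)) (sq_nonneg _)
  linarith

variable {t : ℝ} (ha : 0 < a) (hg : IsRiccatiSubsolutionOn a g (Icc 0 t)) (h0 : g 0 < -a)
include ha hg h0

theorem lt_neg : ∀ s ∈ Icc 0 t, g s < -a := by
  refine hg.1.forall_lt_of_ne_at_first_hit h0 fun s hs hbelow hgs => ?_
  have hne : ∀ r ∈ Icc 0 s, g r ≠ a := by
    intro r hr
    rcases hr.2.lt_or_eq with h | rfl
    · linarith [hbelow r ⟨hr.1, h⟩]
    · linarith
  have h := (hg.mono (Icc_subset_Icc_right hs.2)).monotoneOn_exp_neg_mul_ratio ha.le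
    (convex_Icc 0 s) hne (left_mem_Icc.2 hs.1) (right_mem_Icc.2 hs.1) hs.1
  simp only [hgs, neg_add_cancel, zero_div, mul_zero, neg_zero, exp_zero, one_mul] at h
  linarith [div_pos_of_neg_of_neg (by linarith : g 0 + a < 0) (by linarith : g 0 - a < 0)]

theorem ratio_mul_exp_sub_one_le (ht : 0 ≤ t) :
    (g 0 + a) / (g 0 - a) * exp (a * t) - 1 ≤ 2 * a / (g t - a) := by
  have hlt := hg.lt_neg ha h0
  have h := hg.monotoneOn_exp_neg_mul_ratio ha.le (convex_Icc 0 t)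
    (fun r hr => by linarith [hlt r hr]) (left_mem_Icc.2 ht) (right_mem_Icc.2 ht) ht
  simp only [mul_zero, neg_zero, exp_zero, one_mul] at h
  have hgt : g t - a ≠ 0 := by linarith [hlt t (right_mem_Icc.2 ht)]
  calc (g 0 + a) / (g 0 - a) * exp (a * t) - 1
      ≤ exp (-(a * t)) * ((g t + a) / (g t - a)) * exp (a * t) - 1 := by gcongr
    _ = 2 * a / (g t - a) := by
      rw [mul_comm, ← mul_assoc, ← exp_add, add_neg_cancel, exp_zero, one_mul]
      field_simp
      ring

theorem lt_lifespan (ht : 0 ≤ t) : t < 1 / a * log ((g 0 - a) / (g 0 + a)) := by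
  have hca : g 0 + a < 0 := by linarith
  have hca' : g 0 - a < 0 := by linarith
  have hgt : g t - a < 0 := by linarith [hg.lt_neg ha h0 t (right_mem_Icc.2 ht)]
  have hq : (g 0 + a) / (g 0 - a) * exp (a * t) < 1 := by
    linarith [hg.ratio_mul_exp_sub_one_le ha h0 ht,
      div_neg_of_pos_of_neg (by linarith : 0 < 2 * a) hgt]
  have hexp : exp (a * t) < (g 0 - a) / (g 0 + a) := by
    have hmul : (g 0 + a) / (g 0 - a) * exp (a * t) * (g 0 - a) = exp (a * t) * (g 0 + a) := by
      field_simp [hca'.ne]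
    rw [lt_div_iff_of_neg hca]
    linarith [mul_lt_mul_of_neg_right hq hca']
  rw [one_div, lt_inv_mul_iff₀ ha, lt_log_iff_exp_lt (div_pos_of_neg_of_neg hca' hca)]
  exact hexp

theorem le_riccatiSolution (ht : 0 ≤ t) : g t ≤ riccatiSolution a (g 0) t := by
  have hgt : g t - a < 0 := by linarith [hg.lt_neg ha h0 t (right_mem_Icc.2 ht)]
  have hbound := hg.ratio_mul_exp_sub_one_le ha h0 ht
  have hL : (g 0 + a) / (g 0 - a) * exp (a * t) - 1 < 0 :=
    hbound.trans_lt (div_neg_of_pos_of_neg (by linarith) hgt)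
  have hmul := (le_div_iff_of_neg hgt).mp hbound
  have : g t - a ≤ 2 * a / ((g 0 + a) / (g 0 - a) * exp (a * t) - 1) := by
    rw [le_div_iff_of_neg hL]
    linarith
  rw [riccatiSolution]
  linarith

end IsRiccatiSubsolutionOn

theorem Icc_subset_ivl {T : ℝ≥0∞} {t : ℝ} (ht : t ∈ ivl T) : Icc 0 t ⊆ ivl T :=
  fun _ hs => ⟨hs.1, (ENNReal.ofReal_le_ofReal hs.2).trans_lt ht.2⟩

theorem statement11_general (a : ℝ) (ha : 0 < a) (Tstar : ℝ≥0∞)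
    (g : ℝ → ℝ)
    (hdiff : ∀ t ∈ ivl Tstar, DifferentiableWithinAt ℝ g (ivl Tstar) t)
    (hineq : ∀ t ∈ ivl Tstar,
      derivWithin g (ivl Tstar) t ≤ -(1 / 2) * (g t + a) * (g t - a))
    (h0 : g 0 < -a) :
    (∀ t ∈ ivl Tstar, g t < -a) ∧
    (∀ t ∈ ivl Tstar,
      (g 0 + a) / (g 0 - a) * Real.exp (a * t) - 1 ≤ 2 * a / (g t - a) ∧
        2 * a / (g t - a) ≤ 0) ∧
    Tstar ≤ ENNReal.ofReal (1 / a * Real.log ((g 0 - a) / (g 0 + a))) ∧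
    (Tstar = ENNReal.ofReal (1 / a * Real.log ((g 0 - a) / (g 0 + a))) →
      Filter.Tendsto g (nhdsWithin Tstar.toReal (ivl Tstar)) Filter.atBot) := by
  set B := 1 / a * Real.log ((g 0 - a) / (g 0 + a))
  have hloc : ∀ t ∈ ivl Tstar, IsRiccatiSubsolutionOn a g (Icc 0 t) := fun t ht =>
    (isRiccatiSubsolutionOn_of_derivWithin hdiff hineq).mono (Icc_subset_ivl ht)
  have hlt : ∀ t ∈ ivl Tstar, g t < -a := fun t ht =>
    (hloc t ht).lt_neg ha h0 t (right_mem_Icc.2 ht.1)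
  have hlife : ivl Tstar ⊆ Iio B := fun t ht => (hloc t ht).lt_lifespan ha h0 ht.1
  have hB : 0 < B := by
    have : 1 < (g 0 - a) / (g 0 + a) := by rw [one_lt_div_of_neg (by linarith)]; linarith
    exact mul_pos (one_div_pos.2 ha) (log_pos this)
  refine ⟨hlt, fun t ht => ⟨(hloc t ht).ratio_mul_exp_sub_one_le ha h0 ht.1,
    div_nonpos_of_nonneg_of_nonpos (by linarith) (by linarith [hlt t ht])⟩, ?_, fun hT => ?_⟩
  · by_contra! hT
    exact (mem_Iio.1 (hlife ⟨hB.le, hT⟩)).false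
  · rw [hT, ENNReal.toReal_ofReal hB.le, ← hT]
    refine tendsto_atBot_mono' _ ?_
      ((tendsto_riccatiSolution_atBot ha h0).mono_left (nhdsWithin_mono _ hlife))
    exact eventually_mem_nhdsWithin.mono fun t ht => (hloc t ht).le_riccatiSolution ha h0 ht.1

/-- Riccati-type differential inequality. If `g' ≤ -(1/2)(g+a)(g-a)`
on `[0,T*)` and `g(0) < -a < 0`, then `g < -a` on `[0,T*)`, the explicit bound
`((g(0)+a)/(g(0)-a)) e^{at} - 1 ≤ 2a/(g(t)-a) ≤ 0` holds, `T* ≤ (1/a) ln((g(0)-a)/(g(0)+a))`,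
and if `T*` equals this bound then `g(t) → -∞` as `t → T*`. -/
theorem statement11 (a : ℝ) (ha : 0 < a) (Tstar : ℝ≥0∞) (hT : 0 < Tstar)
    (g : ℝ → ℝ)
    (hdiff : ∀ t ∈ ivl Tstar, DifferentiableWithinAt ℝ g (ivl Tstar) t)
    (hineq : ∀ t ∈ ivl Tstar,
      derivWithin g (ivl Tstar) t ≤ -(1 / 2) * (g t + a) * (g t - a))
    (h0 : g 0 < -a) :
    (∀ t ∈ ivl Tstar, g t < -a) ∧
    (∀ t ∈ ivl Tstar,
      (g 0 + a) / (g 0 - a) * Real.exp (a * t) - 1 ≤ 2 * a / (g t - a) ∧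
        2 * a / (g t - a) ≤ 0) ∧
    Tstar ≤ ENNReal.ofReal (1 / a * Real.log ((g 0 - a) / (g 0 + a))) ∧
    (Tstar = ENNReal.ofReal (1 / a * Real.log ((g 0 - a) / (g 0 + a))) →
      Filter.Tendsto g (nhdsWithin Tstar.toReal (ivl Tstar)) Filter.atBot) :=
  statement11_general a ha Tstar g hdiff hineq h0
end

section
/- Let u : 𝕋^d → ℝ^d (or ℝ^d → ℝ^d) be a smooth vector field and set m = (1 − Δ)u. Then for each i = 1,…,d, the i-th component of (∇u)^T m can be written in divergence form: Σ_{j=1}^d m^j ∂_i u^j = Σ_{j=1}^d ∂_j( (1/2)δ_{ij}|u|² − ∂_i u · ∂_j u + (1/2)δ_{ij}|∇u|² ), where ∂_i u · ∂_j u = Σ_k ∂_i u^k ∂_j u^k and |∇u|² = Σ_{j,k}(∂_k u^j)². -/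
open MeasureTheory Real Filter
open scoped ENNReal NNReal

/-!
Differentiating the two quadratic terms, `Σ_j ∂_j (∂_i u · ∂_j u)` splits into
`∂_i(½|∇u|²)` (using `∂_j ∂_i = ∂_i ∂_j`) and `∂_i u · Δu`; the `δ_{ij}` terms contribute
`∂_i(½|u|²) + ∂_i(½|∇u|²)`. The two `|∇u|²` contributions cancel, leaving
`u · ∂_i u - Δu · ∂_i u = m · ∂_i u`.
-/

section PartialDerivative

variable {d : ℕ} {x : Vec d} {f g : Vec d → ℝ}

lemma pd_add (hf : DifferentiableAt ℝ f x) (hg : DifferentiableAt ℝ g x) (j : Fin d) :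
    pd j (fun y => f y + g y) x = pd j f x + pd j g x := by
  simp [pd, fderiv_fun_add hf hg]

lemma pd_sub (hf : DifferentiableAt ℝ f x) (hg : DifferentiableAt ℝ g x) (j : Fin d) :
    pd j (fun y => f y - g y) x = pd j f x - pd j g x := by
  simp [pd, fderiv_fun_sub hf hg]

lemma pd_const_mul (hf : DifferentiableAt ℝ f x) (c : ℝ) (j : Fin d) :
    pd j (fun y => c * f y) x = c * pd j f x := by
  simp [pd, fderiv_const_mul hf c]

lemma pd_sum {ι : Type*} {s : Finset ι} {F : ι → Vec d → ℝ}
    (hF : ∀ l ∈ s, DifferentiableAt ℝ (F l) x) (j : Fin d) :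
    pd j (fun y => ∑ l ∈ s, F l y) x = ∑ l ∈ s, pd j (F l) x := by
  simp [pd, fderiv_fun_sum hF]

lemma pd_sum_mul {ι : Type*} {s : Finset ι} {F G : ι → Vec d → ℝ}
    (hF : ∀ l ∈ s, DifferentiableAt ℝ (F l) x) (hG : ∀ l ∈ s, DifferentiableAt ℝ (G l) x)
    (j : Fin d) :
    pd j (fun y => ∑ l ∈ s, F l y * G l y) x =
      ∑ l ∈ s, (pd j (F l) x * G l x + F l x * pd j (G l) x) := by
  rw [pd_sum (F := fun l y => F l y * G l y) fun l hl => (hF l hl).mul (hG l hl)]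
  refine Finset.sum_congr rfl fun l hl => ?_
  simp only [pd, fderiv_fun_mul (hF l hl) (hG l hl), add_apply, smul_apply, smul_eq_mul]
  ring

lemma pd_sum_sq {ι : Type*} {s : Finset ι} {F : ι → Vec d → ℝ}
    (hF : ∀ l ∈ s, DifferentiableAt ℝ (F l) x) (j : Fin d) :
    pd j (fun y => ∑ l ∈ s, F l y ^ 2) x = 2 * ∑ l ∈ s, F l x * pd j (F l) x := by
  simp only [sq, pd_sum_mul hF hF, Finset.mul_sum]
  exact Finset.sum_congr rfl fun l _ => by ring

lemma contDiff_pd {m n : WithTop ℕ∞} (hf : ContDiff ℝ n f) (hmn : m + 1 ≤ n) (j : Fin d) :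
    ContDiff ℝ m (pd j f) :=
  (hf.fderiv_right hmn).clm_apply contDiff_const

lemma differentiable_pd (hf : ContDiff ℝ 2 f) (j : Fin d) :
    Differentiable ℝ (pd j f) :=
  (contDiff_pd (m := 1) hf (by norm_num) j).differentiable one_ne_zero

lemma pd_comm (hf : ContDiff ℝ 2 f) (a b : Fin d) :
    pd a (pd b f) x = pd b (pd a f) x := by
  have hdiff : DifferentiableAt ℝ (fderiv ℝ f) x :=
    (hf.fderiv_right (m := 1) (by norm_num)).differentiable one_ne_zero x
  have hsecond : ∀ v w : Vec d,
      fderiv ℝ (fun y => fderiv ℝ f y w) x v = fderiv ℝ (fderiv ℝ f) x v w := fun v w => by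
    simp [fderiv_clm_apply hdiff (differentiableAt_const w)]
  calc pd a (pd b f) x = fderiv ℝ (fderiv ℝ f) x (Pi.single a 1) (Pi.single b 1) :=
        hsecond _ _
    _ = fderiv ℝ (fderiv ℝ f) x (Pi.single b 1) (Pi.single a 1) :=
        (hf.contDiffAt.isSymmSndFDerivAt (by simp)).eq _ _
    _ = pd b (pd a f) x := (hsecond _ _).symm

lemma sum_pd_kronecker {A C : Vec d → ℝ} {B : Fin d → Vec d → ℝ}
    (hA : DifferentiableAt ℝ A x) (hB : ∀ j, DifferentiableAt ℝ (B j) x)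
    (hC : DifferentiableAt ℝ C x) (c : ℝ) (i : Fin d) :
    ∑ j, pd j (fun y => c * (if i = j then 1 else 0) * A y - B j y
        + c * (if i = j then 1 else 0) * C y) x =
      c * pd i A x - ∑ j, pd j (B j) x + c * pd i C x := by
  have hsplit : ∀ j, pd j (fun y => c * (if i = j then 1 else 0) * A y - B j y
        + c * (if i = j then 1 else 0) * C y) x =
      c * (if i = j then 1 else 0) * pd j A x - pd j (B j) x
        + c * (if i = j then 1 else 0) * pd j C x := fun j => by
    rw [pd_add ((hA.const_mul _).fun_sub (hB j)) (hC.const_mul _),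
      pd_sub (hA.const_mul _) (hB j), pd_const_mul hA, pd_const_mul hC]
  rw [Finset.sum_congr rfl fun j _ => hsplit j]
  simp [Finset.sum_add_distrib, Finset.sum_sub_distrib]

end PartialDerivative

section VectorField

variable {d : ℕ} {ι : Type*} [Fintype ι] {u : Vec d → ι → ℝ}

lemma pd_sum_sum_pd_sq (hu : ∀ l, ContDiff ℝ 2 fun y => u y l) (i : Fin d) (x : Vec d) :
    pd i (fun y => ∑ l, ∑ m, (pd m (fun z => u z l) y) ^ 2) x =
      2 * ∑ l, ∑ m, pd m (fun y => u y l) x * pd i (pd m fun y => u y l) x := by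
  have hdpd : ∀ m l, DifferentiableAt ℝ (pd m fun y => u y l) x :=
    fun m l => differentiable_pd (hu l) m x
  rw [pd_sum fun l _ => by fun_prop, Finset.mul_sum]
  exact Finset.sum_congr rfl fun l _ => pd_sum_sq (fun m _ => hdpd m l) i

lemma sum_pd_sum_pd_mul_pd (hu : ∀ l, ContDiff ℝ 2 fun y => u y l) (i : Fin d)
    (x : Vec d) :
    ∑ j, pd j (fun y => ∑ l, pd i (fun z => u z l) y * pd j (fun z => u z l) y) x =
      1 / 2 * pd i (fun y => ∑ l, ∑ m, (pd m (fun z => u z l) y) ^ 2) x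
        + ∑ l, pd i (fun y => u y l) x * lap (fun y => u y l) x := by
  have hdpd : ∀ m l, DifferentiableAt ℝ (pd m fun y => u y l) x :=
    fun m l => differentiable_pd (hu l) m x
  rw [pd_sum_sum_pd_sq hu, ← mul_assoc, one_div_mul_cancel two_ne_zero, one_mul]
  simp_rw [pd_sum_mul (fun l _ => hdpd i l) (fun l _ => hdpd _ l), pd_comm (hu _) _ i, lap,
    Finset.mul_sum, Finset.sum_add_distrib]
  rw [Finset.sum_comm]
  congr 1
  · exact Finset.sum_congr rfl fun l _ => Finset.sum_congr rfl fun m _ => mul_comm _ _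
  · exact Finset.sum_comm

end VectorField

/-- divergence form of `(∇u)^T m`, Section 2. For a smooth vector
field `u` and `m = (1-Δ)u`,
`Σ_j m^j ∂_i u^j = Σ_j ∂_j((1/2)δ_{ij}|u|² - ∂_i u · ∂_j u + (1/2)δ_{ij}|∇u|²)`. -/
theorem statement12 (d : ℕ) (u : Vec d → Fin d → ℝ)
    (hu : ∀ (i : Fin d) (n : ℕ), ContDiff ℝ n fun x => u x i) :
    ∀ (i : Fin d) (x : Vec d),
      ∑ j, mom u x j * pd i (fun y => u y j) x =
        ∑ j, pd j (fun y =>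
            1 / 2 * (if i = j then (1 : ℝ) else 0) * (∑ l, u y l ^ 2)
              - (∑ l, pd i (fun z => u z l) y * pd j (fun z => u z l) y)
              + 1 / 2 * (if i = j then (1 : ℝ) else 0) *
                  (∑ l, ∑ m, (pd m (fun z => u z l) y) ^ 2)) x := by
  intro i x
  have hu2 : ∀ l, ContDiff ℝ 2 fun y => u y l := fun l => hu l 2
  have hdu : ∀ l, Differentiable ℝ fun y => u y l :=
    fun l => (hu2 l).differentiable (by norm_num)
  have hdpd : ∀ m l, Differentiable ℝ (pd m fun y => u y l) :=
    fun m l => differentiable_pd (hu2 l) m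
  have hnormSq : Differentiable ℝ fun y => ∑ l, u y l ^ 2 := by fun_prop
  have hinner : ∀ j, Differentiable ℝ fun y =>
      ∑ l, pd i (fun z => u z l) y * pd j (fun z => u z l) y := by fun_prop
  have hgradSq : Differentiable ℝ fun y => ∑ l, ∑ m, (pd m (fun z => u z l) y) ^ 2 := by
    fun_prop
  rw [sum_pd_kronecker (hnormSq x) (fun j => hinner j x) (hgradSq x),
    sum_pd_sum_pd_mul_pd hu2, pd_sum_sq fun l _ => (hdu l).differentiableAt]
  simp only [mom, sub_mul, Finset.sum_sub_distrib, mul_comm (lap _ x)]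
  ring
end

section
/- Let A = (a^{ij}) be a d×d orthogonal matrix, set ū = Au, m = (1 − Δ)u and ∂̄_i = Σ_j a^{ij} ∂_j. Let u : 𝕋^d → ℝ^d be a smooth vector field satisfying ∂̄_i u = 0 for all i = 2, 3, …, d. Then the first component of A·[(∇u)^T m], namely Σ_{j,k} a^{1j} m^k ∂_j u^k, equals (1/2) ∂̄₁( |ū|² − |∂̄₁ ū|² ). -/
open MeasureTheory Real Filter
open scoped ENNReal NNReal

/-!
Orthogonality of `A` gives `|ū| = |u|` and `|∂̄₁ū| = |∂̄₁u|`, so the right-hand side is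
`Σ_k (u^k ∂̄₁u^k - ∂̄₁u^k ∂̄₁∂̄₁u^k)`. The Laplacian is invariant under orthogonal changes of
coordinates, `Δ = Σ_i ∂̄_i²`, and since `∂̄_i u = 0` for `i ≥ 2` it reduces to `∂̄₁²`. Hence the
left-hand side `Σ_k m^k ∂̄₁u^k = Σ_k (u^k - Δu^k) ∂̄₁u^k` agrees with it.
-/

open scoped Matrix

section

variable {d : ℕ}

theorem dirDeriv_eq_fderiv (n : Vec d) (f : Vec d → ℝ) (x : Vec d) :
    dirDeriv n f x = fderiv ℝ f x n := by
  conv_rhs => rw [← Finset.univ_sum_single n]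
  simp only [dirDeriv, pd, map_sum]
  refine Finset.sum_congr rfl fun j _ => ?_
  rw [← smul_eq_mul, ← map_smul, ← Pi.single_smul', smul_eq_mul, mul_one]

theorem fderiv_fderiv_apply {f : Vec d → ℝ} {x : Vec d}
    (hf : DifferentiableAt ℝ (fderiv ℝ f) x) (v w : Vec d) :
    fderiv ℝ (fun y => fderiv ℝ f y w) x v = fderiv ℝ (fderiv ℝ f) x v w := by
  rw [fderiv_clm_apply hf (differentiableAt_const w)]
  simp

theorem sum_apply_apply_rows_of_orthogonal {A : Matrix (Fin d) (Fin d) ℝ} (hA : Aᵀ * A = 1)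
    (B : Vec d →L[ℝ] Vec d →L[ℝ] ℝ) :
    ∑ i, B (A i) (A i) = ∑ j, B (Pi.single j 1) (Pi.single j 1) := by
  have hrow : ∀ i, A i = ∑ l, A i l • Pi.single l 1 := fun i => by
    simp [← Pi.single_smul, Finset.univ_sum_single]
  have hcol : ∀ l m, ∑ i, A i l * A i m = if l = m then 1 else 0 := fun l m => by
    simpa [Matrix.mul_apply, Matrix.one_apply] using congrFun (congrFun hA l) m
  have hexpand : ∀ i, B (A i) (A i)
      = ∑ l, ∑ m, A i l * A i m * B (Pi.single l 1) (Pi.single m 1) := fun i => by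
    conv_lhs => rw [hrow i]
    simp only [map_sum, map_smul, FunLike.coe_sum, Finset.sum_apply,
      FunLike.coe_smul, Pi.smul_apply, smul_eq_mul, Finset.mul_sum]
    rw [Finset.sum_comm]
    exact Finset.sum_congr rfl fun l _ => Finset.sum_congr rfl fun m _ => by ring
  calc ∑ i, B (A i) (A i)
      = ∑ l, ∑ m, (∑ i, A i l * A i m) * B (Pi.single l 1) (Pi.single m 1) := by
        simp only [hexpand, Finset.sum_mul]
        rw [Finset.sum_comm]
        exact Finset.sum_congr rfl fun l _ => Finset.sum_comm
    _ = ∑ j, B (Pi.single j 1) (Pi.single j 1) := by simp [hcol]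

theorem sum_sq_mulVec_of_orthogonal {A : Matrix (Fin d) (Fin d) ℝ} (hA : Aᵀ * A = 1)
    (v : Vec d) : ∑ i, (∑ j, A i j * v j) ^ 2 = ∑ j, v j ^ 2 := by
  calc ∑ i, (∑ j, A i j * v j) ^ 2 = (A *ᵥ v) ⬝ᵥ (A *ᵥ v) := by
        simp [dotProduct, Matrix.mulVec, sq]
    _ = (Aᵀ * A) *ᵥ v ⬝ᵥ v := by
        rw [Matrix.dotProduct_mulVec, ← Matrix.mulVec_transpose, Matrix.mulVec_mulVec]
    _ = ∑ j, v j ^ 2 := by simp [hA, dotProduct, sq]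

theorem lap_eq_sum_dirDeriv_dirDeriv {A : Matrix (Fin d) (Fin d) ℝ} (hA : Aᵀ * A = 1)
    {f : Vec d → ℝ} {x : Vec d} (hf : DifferentiableAt ℝ (fderiv ℝ f) x) :
    lap f x = ∑ i, dirDeriv (A i) (dirDeriv (A i) f) x := by
  have hdd : ∀ v, dirDeriv v (dirDeriv v f) x = fderiv ℝ (fderiv ℝ f) x v v := fun v => by
    rw [dirDeriv_eq_fderiv, funext (dirDeriv_eq_fderiv v f), fderiv_fderiv_apply hf]
  simp only [hdd, sum_apply_apply_rows_of_orthogonal hA, lap]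
  unfold pd
  simp only [fderiv_fderiv_apply hf]

theorem lap_eq_dirDeriv_dirDeriv_of_flat [NeZero d] {A : Matrix (Fin d) (Fin d) ℝ}
    (hA : Aᵀ * A = 1) {f : Vec d → ℝ} {x : Vec d} (hf : DifferentiableAt ℝ (fderiv ℝ f) x)
    (hflat : ∀ i ≠ 0, ∀ y, dirDeriv (A i) f y = 0) :
    lap f x = dirDeriv (A 0) (dirDeriv (A 0) f) x := by
  rw [lap_eq_sum_dirDeriv_dirDeriv hA hf, Fintype.sum_eq_single 0]
  intro i hi
  simp [funext (hflat i hi), dirDeriv, pd]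

theorem dirDeriv_sum_const_mul {ι : Type*} [Fintype ι] {f : ι → Vec d → ℝ} {x : Vec d}
    (hf : ∀ j, DifferentiableAt ℝ (f j) x) (n : Vec d) (c : ι → ℝ) :
    dirDeriv n (fun y => ∑ j, c j * f j y) x = ∑ j, c j * dirDeriv n (f j) x := by
  simp only [dirDeriv_eq_fderiv]
  rw [fderiv_fun_sum fun j _ => (hf j).const_mul (c j)]
  simp [fderiv_const_mul (hf _)]

theorem dirDeriv_sub_sum_sq {ι : Type*} [Fintype ι] {f g : ι → Vec d → ℝ} {x : Vec d}
    (hf : ∀ k, DifferentiableAt ℝ (f k) x) (hg : ∀ k, DifferentiableAt ℝ (g k) x) (n : Vec d) :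
    dirDeriv n (fun y => ∑ k, f k y ^ 2 - ∑ k, g k y ^ 2) x
      = ∑ k, 2 * f k x * dirDeriv n (f k) x - ∑ k, 2 * g k x * dirDeriv n (g k) x := by
  have hF := (HasFDerivAt.fun_sum (u := Finset.univ) fun k _ => (hf k).hasFDerivAt.pow 2).fun_sub
    (HasFDerivAt.fun_sum (u := Finset.univ) fun k _ => (hg k).hasFDerivAt.pow 2)
  simp only [dirDeriv_eq_fderiv, hF.fderiv]
  simp [mul_comm]

end

theorem statement13_general (d : ℕ) [NeZero d]
    (A : Matrix (Fin d) (Fin d) ℝ) (hA : A * A.transpose = 1)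
    (u : Vec d → Fin d → ℝ)
    (hu : ∀ (i : Fin d) (n : ℕ), ContDiff ℝ n fun x => u x i)
    (hflat : ∀ i : Fin d, i ≠ 0 → ∀ (l : Fin d) (x : Vec d),
      dirDeriv (A i) (fun y => u y l) x = 0) :
    ∀ x : Vec d,
      (∑ j, ∑ k, A 0 j * (mom u x k * pd j (fun y => u y k) x)) =
        1 / 2 * dirDeriv (A 0) (fun y =>
            (∑ i, (∑ j, A i j * u y j) ^ 2) -
              ∑ i, (dirDeriv (A 0) (fun z => ∑ j, A i j * u z j) y) ^ 2) x := by
  intro x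
  have hAA : Aᵀ * A = 1 := mul_eq_one_comm.mp hA
  have hu1 : ∀ k, Differentiable ℝ (fun y => u y k) := fun k =>
    (hu k 1).differentiable one_ne_zero
  have hu2 : ∀ k, Differentiable ℝ (fderiv ℝ fun y => u y k) := fun k =>
    ((hu k 2).fderiv_right (m := 1) le_rfl).differentiable one_ne_zero
  set g : Fin d → Vec d → ℝ := fun k => dirDeriv (A 0) (fun y => u y k) with hg
  have hg1 : ∀ k, Differentiable ℝ (g k) := fun k y => by
    simp only [hg, funext (dirDeriv_eq_fderiv _ _)]
    exact (hu2 k y).clm_apply (differentiableAt_const _)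
  have hbar : (fun y => ∑ i, (∑ j, A i j * u y j) ^ 2
      - ∑ i, (dirDeriv (A 0) (fun z => ∑ j, A i j * u z j) y) ^ 2)
      = fun y => ∑ k, u y k ^ 2 - ∑ k, g k y ^ 2 := by
    funext y
    simp only [dirDeriv_sum_const_mul (fun j => hu1 j y), sum_sq_mulVec_of_orthogonal hAA]
    rfl
  have hlap : ∀ k, lap (fun y => u y k) x = dirDeriv (A 0) (g k) x := fun k =>
    lap_eq_dirDeriv_dirDeriv_of_flat hAA (hu2 k x) (fun i hi => hflat i hi k)
  have hmom : ∀ k, ∑ j, A 0 j * (mom u x k * pd j (fun y => u y k) x) = mom u x k * g k x :=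
    fun k => by
      simp only [hg, dirDeriv, Finset.mul_sum]
      exact Finset.sum_congr rfl fun j _ => by ring
  rw [hbar, dirDeriv_sub_sum_sq (fun k => hu1 k x) (fun k => hg1 k x), Finset.sum_comm]
  simp only [hmom]
  simp only [mom, hlap]
  rw [← Finset.sum_sub_distrib, Finset.mul_sum]
  exact Finset.sum_congr rfl fun k _ => by ring

/-- identity (4.8). Let `A` be orthogonal, `ū = Au`,
`∂̄_i = Σ_j a^{ij}∂_j`, and suppose `∂̄_i u = 0` for all `i ≠ 1`. Then the first
component of `A·[(∇u)^T m]` equals `(1/2) ∂̄₁(|ū|² - |∂̄₁ū|²)`. -/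
theorem statement13 (d : ℕ) [NeZero d]
    (A : Matrix (Fin d) (Fin d) ℝ) (hA : A * A.transpose = 1)
    (u : Vec d → Fin d → ℝ)
    (hu : ∀ (i : Fin d) (n : ℕ), ContDiff ℝ n fun x => u x i)
    (hper : IsPeriodicVec u)
    (hflat : ∀ i : Fin d, i ≠ 0 → ∀ (l : Fin d) (x : Vec d),
      dirDeriv (A i) (fun y => u y l) x = 0) :
    ∀ x : Vec d,
      (∑ j, ∑ k, A 0 j * (mom u x k * pd j (fun y => u y k) x)) =
        1 / 2 * dirDeriv (A 0) (fun y =>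
            (∑ i, (∑ j, A i j * u y j) ^ 2) -
              ∑ i, (dirDeriv (A 0) (fun z => ∑ j, A i j * u z j) y) ^ 2) x :=
  statement13_general d A hA u hu hflat
end
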